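/- Let S be a maximal triangular subalgebra of B(H), let δ : S → B(H) be a bounded derivation, let p ∈ lat(S) with p ≠ 0 and p ≠ 1, and fix unit vectors ξ₀ with p ξ₀ = 0 and η₁ with p η₁ = η₁; set q₁ = ξ₀ ⊗ η₁ (which lies in S since p B(H) p⊥ ⊆ S). Then there exists a bounded linear operator c₂ ∈ B(H) with ‖c₂‖ ≤ 2‖δ‖ such that c₂ p = 0, p c₂ (1 − p) = 0, and for every unit vector ξ with p ξ = 0, writing q = ξ ⊗ η₁ and p_ξ = ξ ⊗ ξ, one has p_ξ c₂ (1 − p) = q* δ(q₁) q₁* q − q* δ(q) (1 − p). -/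

import Mathlib

/-!
Because `S` is maximal triangular and `p ∈ lat S`, the algebra `S + p B(H) p⊥` has the same
diagonal as `S` and hence equals `S`; in particular `(p⊥ξ) ⊗ η₁ ∈ S` for every `ξ`. The map
`Ψ : ξ ↦ δ((p⊥ξ) ⊗ η₁)* η₁` is then a bounded linear operator with `‖Ψ‖ ≤ ‖δ‖`, and with
`λ = ⟪η₁, δ(q₁) ξ₀⟫` the operator `c₂ = p⊥ (λ - Ψ*) p⊥` does the job: multiplying by the rank-one
operators of the statement only sees `⟪ξ, c₂ ζ⟫ = λ ⟪ξ, ζ⟫ - ⟪η₁, δ(q) ζ⟫` for `ξ, ζ ∈ p⊥H`.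
-/

set_option maxHeartbeats 1000000
set_option synthInstance.maxHeartbeats 400000

open ContinuousLinearMap in
/-- The diagonal `S ∩ S*` of a subalgebra of `B(H)`. -/
def diagonal {H : Type*} [NormedAddCommGroup H] [InnerProductSpace ℂ H] [CompleteSpace H]
    (S : Subalgebra ℂ (H →L[ℂ] H)) : Set (H →L[ℂ] H) :=
  {a | a ∈ S ∧ adjoint a ∈ S}

/-- A set of operators is maximal abelian in `B(H)` if it is commutative and contains
every operator commuting with all of its members. -/
def IsMaxAbelian {H : Type*} [NormedAddCommGroup H] [InnerProductSpace ℂ H]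
    (D : Set (H →L[ℂ] H)) : Prop :=
  (∀ a ∈ D, ∀ b ∈ D, a * b = b * a) ∧
  (∀ b : H →L[ℂ] H, (∀ a ∈ D, a * b = b * a) → b ∈ D)

/-- A (unital) subalgebra of `B(H)` is triangular if its diagonal `S ∩ S*` is
maximal abelian in `B(H)`. -/
def IsTriangular {H : Type*} [NormedAddCommGroup H] [InnerProductSpace ℂ H] [CompleteSpace H]
    (S : Subalgebra ℂ (H →L[ℂ] H)) : Prop :=
  IsMaxAbelian (diagonal S)

/-- `S` is maximal triangular if it is triangular and not properly contained in any
other triangular subalgebra. -/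
def IsMaxTriangular {H : Type*} [NormedAddCommGroup H] [InnerProductSpace ℂ H] [CompleteSpace H]
    (S : Subalgebra ℂ (H →L[ℂ] H)) : Prop :=
  IsTriangular S ∧ ∀ T : Subalgebra ℂ (H →L[ℂ] H), IsTriangular T → S ≤ T → S = T

open ContinuousLinearMap in
/-- `p ∈ lat S`: `p` is an orthogonal projection with `a p = p a p` for all `a ∈ S`. -/
def InLat {H : Type*} [NormedAddCommGroup H] [InnerProductSpace ℂ H] [CompleteSpace H]
    (S : Subalgebra ℂ (H →L[ℂ] H)) (p : H →L[ℂ] H) : Prop :=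
  p * p = p ∧ adjoint p = p ∧ ∀ a ∈ S, a * p = p * a * p

/-- A bounded derivation from `S` into `B(H)`: a continuous linear map obeying the
Leibniz product rule on `S`. -/
def IsDerivation {H : Type*} [NormedAddCommGroup H] [InnerProductSpace ℂ H] [CompleteSpace H]
    (S : Subalgebra ℂ (H →L[ℂ] H)) (δ : S →L[ℂ] (H →L[ℂ] H)) : Prop :=
  ∀ a b : S, δ (a * b) = δ a * (b : H →L[ℂ] H) + (a : H →L[ℂ] H) * δ b

/-- The rank-one operator `ξ ⊗ η : ζ ↦ ⟨ζ, ξ⟩ η` (inner product linear in the first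
argument, i.e. `⟪ξ, ζ⟫ • η` in Mathlib's convention). Its adjoint is `η ⊗ ξ`. -/
noncomputable def rankOne {H : Type*} [NormedAddCommGroup H] [InnerProductSpace ℂ H]
    (ξ η : H) : H →L[ℂ] H :=
  (ContinuousLinearMap.toSpanSingleton ℂ η).comp (innerSL ℂ ξ)

section

open ContinuousLinearMap

variable {H : Type*} [NormedAddCommGroup H] [InnerProductSpace ℂ H]

lemma mul_rankOne (a : H →L[ℂ] H) (ξ η : H) : a * rankOne ξ η = rankOne ξ (a η) :=
  InnerProductSpace.comp_rankOne η ξ a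

lemma rankOne_mul_rankOne (ξ η ξ' η' : H) :
    rankOne ξ η * rankOne ξ' η' = inner ℂ ξ η' • rankOne ξ' η :=
  InnerProductSpace.rankOne_comp_rankOne η ξ η' ξ'

variable [CompleteSpace H] {S : Subalgebra ℂ (H →L[ℂ] H)} {p : H →L[ℂ] H}

lemma adjoint_rankOne (ξ η : H) : adjoint (rankOne ξ η) = rankOne η ξ :=
  InnerProductSpace.adjoint_rankOne η ξ

lemma rankOne_mul (ξ η : H) (a : H →L[ℂ] H) : rankOne ξ η * a = rankOne (adjoint a ξ) η :=
  InnerProductSpace.rankOne_comp η ξ a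

namespace InLat

lemma isStarProjection (hp : InLat S p) : IsStarProjection p :=
  ⟨hp.1, by rw [IsSelfAdjoint, star_eq_adjoint, hp.2.1]⟩

lemma one_sub_mul_mul_self (hp : InLat S p) {a : H →L[ℂ] H} (ha : a ∈ S) :
    (1 - p) * a * p = 0 := by
  rw [sub_mul, one_mul, sub_mul, hp.2.2 a ha, sub_self]

lemma mul_star_mul_one_sub (hp : InLat S p) {a : H →L[ℂ] H} (ha : a ∈ S) :
    p * star a * (1 - p) = 0 := by
  have hp' := hp.isStarProjection
  simpa [mul_assoc, hp'.isSelfAdjoint.star_eq, hp'.one_sub.isSelfAdjoint.star_eq] using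
    congr(star $(hp.one_sub_mul_mul_self ha))

lemma mem_diagonal (hS : IsTriangular S) (hp : InLat S p) : p ∈ diagonal S := by
  refine hS.2 p fun a ha => ?_
  have h : star (adjoint a * p) = star (p * adjoint a * p) := congr(star $(hp.2.2 _ ha.2))
  simp only [star_mul, star_eq_adjoint, adjoint_adjoint, hp.2.1, ← mul_assoc] at h
  rw [hp.2.2 a ha.1, h, mul_assoc _ p p, hp.1]

/-- `S + p B(H) p⊥`, a subalgebra because `p⊥ S p = 0`. -/
def cornerExtension (hp : InLat S p) : Subalgebra ℂ (H →L[ℂ] H) where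
  carrier := {t | ∃ a ∈ S, ∃ x : H →L[ℂ] H, t = a + p * x * (1 - p)}
  one_mem' := ⟨1, S.one_mem, 0, by simp⟩
  zero_mem' := ⟨0, S.zero_mem, 0, by simp⟩
  add_mem' := by
    rintro _ _ ⟨a, ha, x, rfl⟩ ⟨b, hb, y, rfl⟩
    exact ⟨a + b, S.add_mem ha hb, x + y, by noncomm_ring⟩
  mul_mem' := by
    rintro _ _ ⟨a, ha, x, rfl⟩ ⟨b, hb, y, rfl⟩
    refine ⟨a * b, S.mul_mem ha hb, a * p * y + x * ((1 - p) * b), ?_⟩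
    have hap : p * a * p = a * p := (hp.2.2 a ha).symm
    have hbp : (1 - p) * b * (1 - p) = (1 - p) * b := by
      rw [mul_sub, mul_one, hp.one_sub_mul_mul_self hb, sub_zero]
    have hpp : (1 - p) * p = 0 := hp.isStarProjection.one_sub_mul_self
    calc (a + p * x * (1 - p)) * (b + p * y * (1 - p))
        = a * b + p * a * p * y * (1 - p) + p * x * ((1 - p) * b * (1 - p))
            + p * x * ((1 - p) * p) * y * (1 - p) := by
          rw [hap, hbp]; noncomm_ring
      _ = a * b + p * (a * p * y + x * ((1 - p) * b)) * (1 - p) := by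
          rw [hpp]; noncomm_ring
  algebraMap_mem' c := ⟨algebraMap ℂ _ c, S.algebraMap_mem c, 0, by simp⟩

lemma le_cornerExtension (hp : InLat S p) : S ≤ hp.cornerExtension :=
  fun a ha => ⟨a, ha, 0, by simp⟩

lemma corner_mem_cornerExtension (hp : InLat S p) (x : H →L[ℂ] H) :
    p * x * (1 - p) ∈ hp.cornerExtension :=
  ⟨0, S.zero_mem, x, (zero_add _).symm⟩

lemma star_mem_of_mem_cornerExtension (hp : InLat S p) (hpS : p ∈ S) {t : H →L[ℂ] H}
    (ht : t ∈ hp.cornerExtension) (hst : star t ∈ hp.cornerExtension) : star t ∈ S := by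
  obtain ⟨a, ha, x, rfl⟩ := ht
  obtain ⟨b, hb, y, hby⟩ := hst
  have hp' := hp.isStarProjection
  -- the corner `p t* p⊥` vanishes since `p⊥ t p` does
  have hcorner : p * (b + p * y * (1 - p)) * (1 - p) = 0 := by
    have h := hp.mul_star_mul_one_sub ha
    rw [← hby, star_add, star_mul, star_mul, hp'.isSelfAdjoint.star_eq,
      hp'.one_sub.isSelfAdjoint.star_eq]
    calc p * (star a + (1 - p) * (star x * p)) * (1 - p)
        = p * star a * (1 - p) + (p * (1 - p)) * star x * (p * (1 - p)) := by noncomm_ring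
      _ = 0 := by rw [h, hp'.mul_one_sub_self, zero_mul, zero_mul, add_zero]
  have hy : p * y * (1 - p) = -(p * b * (1 - p)) := by
    refine eq_neg_of_add_eq_zero_right (Eq.trans ?_ hcorner)
    calc p * b * (1 - p) + p * y * (1 - p)
        = p * b * (1 - p) + (p * p) * y * ((1 - p) * (1 - p)) := by
          rw [hp'.isIdempotentElem.eq, hp'.one_sub.isIdempotentElem.eq]
      _ = p * (b + p * y * (1 - p)) * (1 - p) := by noncomm_ring
  rw [hby, hy]
  refine S.add_mem hb (S.neg_mem ?_)
  rw [mul_sub, mul_one]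
  exact S.sub_mem (S.mul_mem hpS hb) (S.mul_mem (S.mul_mem hpS hb) hpS)

lemma diagonal_cornerExtension (hp : InLat S p) (hpS : p ∈ S) :
    diagonal hp.cornerExtension = diagonal S := by
  ext t
  refine ⟨fun ⟨ht, hat⟩ => ⟨?_, ?_⟩,
    fun ⟨ht, hat⟩ => ⟨hp.le_cornerExtension ht, hp.le_cornerExtension hat⟩⟩
  · simpa using hp.star_mem_of_mem_cornerExtension hpS (t := star t) hat (by simpa using ht)
  · simpa [star_eq_adjoint] using hp.star_mem_of_mem_cornerExtension hpS ht
      (by simpa [star_eq_adjoint] using hat)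

lemma corner_mem (hS : IsMaxTriangular S) (hp : InLat S p) (x : H →L[ℂ] H) :
    p * x * (1 - p) ∈ S := by
  have hT : IsTriangular hp.cornerExtension := by
    rw [IsTriangular, hp.diagonal_cornerExtension (hp.mem_diagonal hS.1).1]
    exact hS.1
  rw [hS.2 _ hT hp.le_cornerExtension]
  exact hp.corner_mem_cornerExtension x

end InLat

lemma adjoint_rankOne_mul_mul_adjoint_rankOne_mul_rankOne (ξ ξ' η : H) (d : H →L[ℂ] H) :
    adjoint (rankOne ξ η) * d * adjoint (rankOne ξ' η) * rankOne ξ η =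
      (inner ℂ η (d ξ') * inner ℂ η η) • rankOne ξ ξ := by
  rw [adjoint_rankOne, adjoint_rankOne, rankOne_mul, rankOne_mul_rankOne, smul_mul_assoc,
    rankOne_mul_rankOne, smul_smul, adjoint_inner_left]

lemma IsStarProjection.rankOne_mul_corner_mul {e : H →L[ℂ] H} (he : IsStarProjection e) {ξ : H}
    (heξ : e ξ = ξ) (c : ℂ) (a : H →L[ℂ] H) :
    rankOne ξ ξ * (e * (c • 1 - a) * e) * e = c • rankOne ξ ξ - rankOne ξ ξ * a * e := by
  have hξe : rankOne ξ ξ * e = rankOne ξ ξ := by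
    rw [rankOne_mul, he.isSelfAdjoint.adjoint_eq, heξ]
  calc rankOne ξ ξ * (e * (c • 1 - a) * e) * e = rankOne ξ ξ * e * (c • 1 - a) * (e * e) := by
        simp only [mul_assoc]
    _ = c • rankOne ξ ξ - rankOne ξ ξ * a * e := by
        rw [hξe, he.isIdempotentElem.eq, mul_sub, sub_mul, mul_smul_comm, mul_one, smul_mul_assoc,
          hξe]

lemma InLat.rankOne_one_sub_mem (hS : IsMaxTriangular S) (hp : InLat S p) {η : H} (hη : p η = η)
    (ξ : H) : rankOne ((1 - p) ξ) η ∈ S := by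
  have h : rankOne ((1 - p) ξ) η = p * rankOne ξ η * (1 - p) := by
    rw [mul_rankOne, hη, rankOne_mul, hp.isStarProjection.one_sub.isSelfAdjoint.adjoint_eq]
  rw [h]
  exact hp.corner_mem hS _

lemma norm_apply_rankOne_le (δ : S →L[ℂ] (H →L[ℂ] H)) {ξ η : H} (h : rankOne ξ η ∈ S) :
    ‖δ ⟨rankOne ξ η, h⟩‖ ≤ ‖δ‖ * (‖η‖ * ‖ξ‖) := by
  calc ‖δ ⟨rankOne ξ η, h⟩‖ ≤ ‖δ‖ * ‖rankOne ξ η‖ := le_opNorm δ _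
    _ = ‖δ‖ * (‖η‖ * ‖ξ‖) := congrArg (‖δ‖ * ·) (InnerProductSpace.norm_rankOne η ξ)

lemma norm_inner_apply_rankOne_le (δ : S →L[ℂ] (H →L[ℂ] H)) {ξ η : H} (h : rankOne ξ η ∈ S) :
    ‖inner ℂ η (δ ⟨rankOne ξ η, h⟩ ξ)‖ ≤ ‖δ‖ * (‖η‖ * ‖ξ‖) ^ 2 := by
  calc ‖inner ℂ η (δ ⟨rankOne ξ η, h⟩ ξ)‖ ≤ ‖η‖ * (‖δ ⟨rankOne ξ η, h⟩‖ * ‖ξ‖) := by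
        grw [norm_inner_le_norm, le_opNorm]
    _ ≤ ‖η‖ * (‖δ‖ * (‖η‖ * ‖ξ‖) * ‖ξ‖) := by grw [norm_apply_rankOne_le]
    _ = ‖δ‖ * (‖η‖ * ‖ξ‖) ^ 2 := by ring

/-- `ξ ↦ δ(e ξ ⊗ η)* η`, linear as it passes through two conjugate-linear maps. -/
noncomputable def rankOneAdjointOp (δ : S →L[ℂ] (H →L[ℂ] H)) {e : H →L[ℂ] H} {η : H}
    (h : ∀ ξ, rankOne (e ξ) η ∈ S) : H →L[ℂ] H :=
  (apply ℂ H η).comp <|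
    ((adjoint : (H →L[ℂ] H) ≃ₗᵢ⋆[ℂ] (H →L[ℂ] H)).toContinuousLinearEquiv :
      (H →L[ℂ] H) →L⋆[ℂ] (H →L[ℂ] H)).comp <|
      δ.comp <| ((InnerProductSpace.rankOne ℂ η).comp e).codRestrict (Subalgebra.toSubmodule S) h

lemma rankOneAdjointOp_apply (δ : S →L[ℂ] (H →L[ℂ] H)) {e : H →L[ℂ] H} {η : H}
    (h : ∀ ξ, rankOne (e ξ) η ∈ S) (ξ : H) :
    rankOneAdjointOp δ h ξ = adjoint (δ ⟨rankOne (e ξ) η, h ξ⟩) η :=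
  rfl

lemma norm_rankOneAdjointOp_le (δ : S →L[ℂ] (H →L[ℂ] H)) {e : H →L[ℂ] H} {η : H}
    (h : ∀ ξ, rankOne (e ξ) η ∈ S) (he : ‖e‖ ≤ 1) (hη : ‖η‖ ≤ 1) :
    ‖rankOneAdjointOp δ h‖ ≤ ‖δ‖ := by
  refine opNorm_le_bound _ (norm_nonneg δ) fun ξ => ?_
  rw [rankOneAdjointOp_apply]
  calc ‖adjoint (δ ⟨rankOne (e ξ) η, h ξ⟩) η‖
      ≤ ‖adjoint (δ ⟨rankOne (e ξ) η, h ξ⟩)‖ * ‖η‖ := le_opNorm _ η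
    _ = ‖δ ⟨rankOne (e ξ) η, h ξ⟩‖ * ‖η‖ := by rw [LinearIsometryEquiv.norm_map]
    _ ≤ ‖δ‖ * (‖η‖ * (‖e‖ * ‖ξ‖)) * ‖η‖ := by grw [norm_apply_rankOne_le, le_opNorm]
    _ ≤ ‖δ‖ * (1 * (1 * ‖ξ‖)) * 1 := by gcongr
    _ = ‖δ‖ * ‖ξ‖ := by ring

lemma IsStarProjection.norm_mul_smul_one_sub_mul_le {A : Type*} [NormedRing A] [StarRing A]
    [CStarRing A] [NormedAlgebra ℂ A] {e : A} (he : IsStarProjection e) (c : ℂ) (a : A) :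
    ‖e * (c • 1 - a) * e‖ ≤ ‖c‖ + ‖a‖ :=
  calc ‖e * (c • 1 - a) * e‖ ≤ ‖e‖ * (‖c‖ * ‖(1 : A)‖ + ‖a‖) * ‖e‖ := by
        grw [norm_mul₃_le, norm_sub_le, norm_smul_le]
    _ ≤ 1 * (‖c‖ * 1 + ‖a‖) * 1 := by
        gcongr
        exacts [he.norm_le, (IsStarProjection.one A).norm_le, he.norm_le]
    _ = ‖c‖ + ‖a‖ := by ring

end

open ContinuousLinearMap in
theorem exists_c2_general {H : Type*} [NormedAddCommGroup H] [InnerProductSpace ℂ H]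
    [CompleteSpace H] {S : Subalgebra ℂ (H →L[ℂ] H)} (hS : IsMaxTriangular S)
    (δ : S →L[ℂ] (H →L[ℂ] H))
    {p : H →L[ℂ] H} (hp : InLat S p)
    {ξ₀ : H} (hξ₀ : ‖ξ₀‖ = 1)
    {η₁ : H} (hη₁ : ‖η₁‖ = 1) (hpη₁ : p η₁ = η₁)
    (hq₁S : rankOne ξ₀ η₁ ∈ S) :
    ∃ c₂ : H →L[ℂ] H, ‖c₂‖ ≤ 2 * ‖δ‖ ∧ c₂ * p = 0 ∧ p * c₂ * (1 - p) = 0 ∧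
      ∀ ξ : H, ‖ξ‖ = 1 → p ξ = 0 → ∀ hqS : rankOne ξ η₁ ∈ S,
        rankOne ξ ξ * c₂ * (1 - p) =
          adjoint (rankOne ξ η₁) * δ ⟨rankOne ξ₀ η₁, hq₁S⟩ *
              adjoint (rankOne ξ₀ η₁) * rankOne ξ η₁ -
            adjoint (rankOne ξ η₁) * δ ⟨rankOne ξ η₁, hqS⟩ * (1 - p) := by
  have hp' := hp.isStarProjection
  have he := hp'.one_sub
  set Ψ := rankOneAdjointOp δ (hp.rankOne_one_sub_mem hS hpη₁)
  set lam : ℂ := inner ℂ η₁ (δ ⟨rankOne ξ₀ η₁, hq₁S⟩ ξ₀)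
  refine ⟨(1 - p) * (lam • 1 - adjoint Ψ) * (1 - p),
    (he.norm_mul_smul_one_sub_mul_le lam _).trans ?_, ?_, ?_, ?_⟩
  · have hlam : ‖lam‖ ≤ ‖δ‖ := by
      simpa [hξ₀, hη₁] using norm_inner_apply_rankOne_le δ hq₁S
    rw [LinearIsometryEquiv.norm_map, two_mul]
    exact add_le_add hlam (norm_rankOneAdjointOp_le δ _ he.norm_le hη₁.le)
  · rw [mul_assoc, hp'.one_sub_mul_self, mul_zero]
  · simp only [← mul_assoc, hp'.mul_one_sub_self, zero_mul]
  · intro ξ _ hpξ hqS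
    have heξ : (1 - p) ξ = ξ := by simp [hpξ]
    have hΨ : rankOne ξ ξ * adjoint Ψ = adjoint (rankOne ξ η₁) * δ ⟨rankOne ξ η₁, hqS⟩ := by
      rw [adjoint_rankOne, rankOne_mul, rankOne_mul, adjoint_adjoint]
      simp only [Ψ, rankOneAdjointOp_apply, heξ]
    rw [he.rankOne_mul_corner_mul heξ, hΨ, adjoint_rankOne_mul_mul_adjoint_rankOne_mul_rankOne,
      inner_self_eq_norm_sq_to_K, hη₁]
    simp [lam]

open ContinuousLinearMap in
/-- (Lemma on `c₂`.) Let `δ` be a bounded derivation on a maximal triangular algebra `S`,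
let `p ∈ lat(S)` be nontrivial, fix unit vectors `ξ₀ ∈ p⊥`, `η₁ ∈ p`, and set
`q₁ = ξ₀ ⊗ η₁ ∈ S`. Then there is `c₂ ∈ B(H)` with `‖c₂‖ ≤ 2‖δ‖`, `c₂ p = 0`,
`p c₂ p⊥ = 0`, and for every unit vector `ξ ∈ p⊥`, with `q = ξ ⊗ η₁ ∈ S` and
`p_ξ = ξ ⊗ ξ`, one has `p_ξ c₂ p⊥ = q* δ(q₁) q₁* q − q* δ(q) p⊥`. -/
theorem exists_c2 {H : Type*} [NormedAddCommGroup H] [InnerProductSpace ℂ H]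
    [CompleteSpace H] {S : Subalgebra ℂ (H →L[ℂ] H)} (hS : IsMaxTriangular S)
    (δ : S →L[ℂ] (H →L[ℂ] H)) (hδ : IsDerivation S δ)
    {p : H →L[ℂ] H} (hp : InLat S p) (hp0 : p ≠ 0) (hp1 : p ≠ 1)
    {ξ₀ : H} (hξ₀ : ‖ξ₀‖ = 1) (hpξ₀ : p ξ₀ = 0)
    {η₁ : H} (hη₁ : ‖η₁‖ = 1) (hpη₁ : p η₁ = η₁)
    (hq₁S : rankOne ξ₀ η₁ ∈ S) :
    ∃ c₂ : H →L[ℂ] H, ‖c₂‖ ≤ 2 * ‖δ‖ ∧ c₂ * p = 0 ∧ p * c₂ * (1 - p) = 0 ∧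
      ∀ ξ : H, ‖ξ‖ = 1 → p ξ = 0 → ∀ hqS : rankOne ξ η₁ ∈ S,
        rankOne ξ ξ * c₂ * (1 - p) =
          adjoint (rankOne ξ η₁) * δ ⟨rankOne ξ₀ η₁, hq₁S⟩ *
              adjoint (rankOne ξ₀ η₁) * rankOne ξ η₁ -
            adjoint (rankOne ξ η₁) * δ ⟨rankOne ξ η₁, hqS⟩ * (1 - p) :=
  exists_c2_general hS δ hp hξ₀ hη₁ hpη₁ hq₁S
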